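/- Let Γ̃ be a grading of K[u,v] by an abelian group with u and v homogeneous. Let ξ₁ be a Γ̃-graded elementary automorphism of K[u,v] and ξ₂ a Γ̃-graded linear automorphism of K[u,v]. Then ξ₂∘ξ₁ = ζ₂∘ζ₁∘ζ₀, where ζ₀ and ζ₂ are Γ̃-graded linear automorphisms, ζ₁ is a Γ̃-graded elementary automorphism, and ζ₂(u) = λu for some nonzero λ ∈ K. -/

import Mathlib

open MvPolynomial

/-- An automorphism of `K[u,v]` is *elementary* if it sends one variable `w` to `w + F`
for a polynomial `F` in the other variable and fixes the other variable. -/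
def IsElementary {K : Type*} [CommRing K]
    (φ : MvPolynomial (Fin 2) K ≃ₐ[K] MvPolynomial (Fin 2) K) : Prop :=
  ∃ (i : Fin 2) (F : MvPolynomial (Fin 2) K), i ∉ F.vars ∧
    φ (X i) = X i + F ∧ ∀ j : Fin 2, j ≠ i → φ (X j) = X j

/-- An automorphism of `K[u,v]` is *linear* if it sends each variable to a `K`-linear
combination of the variables. -/
def IsLinearAut {K : Type*} [CommRing K]
    (φ : MvPolynomial (Fin 2) K ≃ₐ[K] MvPolynomial (Fin 2) K) : Prop :=
  ∀ i : Fin 2, ∃ c : Fin 2 → K, φ (X i) = ∑ j : Fin 2, C (c j) * X j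

/-- For a grading of `K[u,v]` by an abelian group with homogeneous variables of degrees
`w 0`, `w 1`, an automorphism is *graded* if it maps each homogeneous component into itself. -/
def IsGraded {K : Type*} [CommRing K] {G : Type*} [AddCommGroup G] (w : Fin 2 → G)
    (φ : MvPolynomial (Fin 2) K ≃ₐ[K] MvPolynomial (Fin 2) K) : Prop :=
  ∀ (g : G) (f : MvPolynomial (Fin 2) K),
    f.IsWeightedHomogeneous w g → (φ f).IsWeightedHomogeneous w g

/-!
Write `ξ₁ : X i ↦ X i + F (X j)` and `ξ₂ (X j) = r u + s v`. Take `N` to be the identity if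
`s = 0`, and `u ↦ u, v ↦ r u + s v` otherwise; `N` is graded because `s ≠ 0` forces
`deg v = deg (X j)`. In both cases `ζ₀ := N⁻¹ ξ₂` sends `X j` to a multiple of a variable `X m`,
so the conjugate `ζ₀ ξ₁ ζ₀⁻¹` is again elementary (it fixes `X m`), and
`ξ₂ ξ₁ = N (ζ₀ ξ₁ ζ₀⁻¹) ζ₀`.
-/

namespace MvPolynomial

variable {σ τ R M : Type*} [CommSemiring R] [AddCommMonoid M]

@[simp] theorem algEquiv_C (φ : MvPolynomial σ R ≃ₐ[R] MvPolynomial σ R) (a : R) : φ (C a) = C a :=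
  φ.commutes a

theorem IsWeightedHomogeneous.aeval {w : σ → M} {w' : τ → M} {p : MvPolynomial σ R} {m : M}
    (hp : p.IsWeightedHomogeneous w m) {g : σ → MvPolynomial τ R}
    (hg : ∀ i, (g i).IsWeightedHomogeneous w' (w i)) :
    (aeval g p).IsWeightedHomogeneous w' m := by
  induction hp using IsWeightedHomogeneous.induction_on with
  | zero => simpa using isWeightedHomogeneous_zero R w' m
  | add p q _ _ hp hq => simpa using hp.add hq
  | monomial d r hd =>
    rw [aeval_monomial, algebraMap_eq, ← hd, Finsupp.weight_apply, Finsupp.sum, Finsupp.prod]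
    exact (IsWeightedHomogeneous.prod d.support (fun i => g i ^ d i) (fun i => d i • w i)
      fun i _ => (hg i).pow (d i)).C_mul r

end MvPolynomial

section Graded

variable {R G : Type*} [CommRing R] [AddCommGroup G] {w : Fin 2 → G}
  {φ ψ : MvPolynomial (Fin 2) R ≃ₐ[R] MvPolynomial (Fin 2) R}

theorem isGraded_of_isWeightedHomogeneous_X
    (h : ∀ k, (φ (X k)).IsWeightedHomogeneous w (w k)) : IsGraded w φ := by
  intro g f hf
  have hφ : φ f = aeval (fun k => φ (X k)) f :=
    AlgHom.congr_fun (aeval_unique φ.toAlgHom) f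
  exact hφ ▸ hf.aeval h

theorem IsGraded.mul (hφ : IsGraded w φ) (hψ : IsGraded w ψ) : IsGraded w (φ * ψ) :=
  fun g f hf => hφ g _ (hψ g f hf)

theorem IsGraded.map_weightedHomogeneousComponent (hφ : IsGraded w φ) (n : G)
    (f : MvPolynomial (Fin 2) R) :
    φ (weightedHomogeneousComponent w n f) = weightedHomogeneousComponent w n (φ f) := by
  classical
  induction f using MvPolynomial.induction_on' with
  | monomial d a =>
    have hd := isWeightedHomogeneous_monomial w d a rfl
    rw [weightedHomogeneousComponent_of_mem hd, weightedHomogeneousComponent_of_mem (hφ _ _ hd)]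
    split_ifs <;> simp
  | add p q hp hq => simp only [map_add, hp, hq]

theorem IsGraded.symm (hφ : IsGraded w φ) : IsGraded w φ.symm := by
  intro g f hf
  have hcomp : weightedHomogeneousComponent w g (φ.symm f) = φ.symm f := by
    rw [φ.eq_symm_apply, hφ.map_weightedHomogeneousComponent, φ.apply_symm_apply,
      hf.weightedHomogeneousComponent_same]
  exact hcomp ▸ weightedHomogeneousComponent_isWeightedHomogeneous g _

end Graded

section ChangeOfVariables

variable {σ R : Type*} [Fintype σ] [CommSemiring R]

noncomputable def linearSubst (A : Matrix σ σ R) (i : σ) : MvPolynomial σ R :=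
  ∑ j, C (A i j) * X j

theorem aeval_linearSubst (A B : Matrix σ σ R) (i : σ) :
    aeval (linearSubst A) (linearSubst B i) = linearSubst (B * A) i := by
  simp only [linearSubst, map_sum, map_mul, aeval_C, aeval_X, algebraMap_eq, Finset.mul_sum,
    Matrix.mul_apply, Finset.sum_mul, mul_assoc]
  exact Finset.sum_comm

theorem linearSubst_one [DecidableEq σ] : linearSubst (1 : Matrix σ σ R) = X := by
  ext1 i
  simp [linearSubst, Matrix.one_apply]

noncomputable def linearChangeOfVars [DecidableEq σ] (A : GL σ R) :
    MvPolynomial σ R ≃ₐ[R] MvPolynomial σ R :=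
  AlgEquiv.ofAlgHom (aeval (linearSubst A)) (aeval (linearSubst ↑A⁻¹))
    (algHom_ext fun i => by
      rw [AlgHom.comp_apply, aeval_X, aeval_linearSubst, Units.inv_mul, linearSubst_one]; rfl)
    (algHom_ext fun i => by
      rw [AlgHom.comp_apply, aeval_X, aeval_linearSubst, Units.mul_inv, linearSubst_one]; rfl)

theorem linearChangeOfVars_X [DecidableEq σ] (A : GL σ R) (i : σ) :
    linearChangeOfVars A (X i) = ∑ j, C ((A : Matrix σ σ R) i j) * X j :=
  aeval_X _ i

end ChangeOfVariables

section Linear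

variable {R : Type*} [CommRing R] {φ ψ : MvPolynomial (Fin 2) R ≃ₐ[R] MvPolynomial (Fin 2) R}

theorem isLinearAut_linearChangeOfVars (A : GL (Fin 2) R) :
    IsLinearAut (linearChangeOfVars A) :=
  fun i => ⟨_, linearChangeOfVars_X A i⟩

theorem isLinearAut_iff_mem_span :
    IsLinearAut φ ↔ ∀ i, φ (X i) ∈ Submodule.span R (Set.range X) := by
  simp only [IsLinearAut, Submodule.mem_span_range_iff_exists_fun, smul_eq_C_mul, eq_comm]

theorem IsLinearAut.map_mem_span (hφ : IsLinearAut φ) {p : MvPolynomial (Fin 2) R}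
    (hp : p ∈ Submodule.span R (Set.range X)) : φ p ∈ Submodule.span R (Set.range X) := by
  rw [isLinearAut_iff_mem_span] at hφ
  have hle : Submodule.span R (Set.range X) ≤
      (Submodule.span R (Set.range X)).comap φ.toLinearMap :=
    Submodule.span_le.mpr (Set.range_subset_iff.mpr hφ)
  exact hle hp

theorem IsLinearAut.mul (hφ : IsLinearAut φ) (hψ : IsLinearAut ψ) : IsLinearAut (φ * ψ) :=
  isLinearAut_iff_mem_span.mpr fun i =>
    hφ.map_mem_span (isLinearAut_iff_mem_span.mp hψ i)

theorem IsLinearAut.symm {K : Type*} [Field K]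
    {φ : MvPolynomial (Fin 2) K ≃ₐ[K] MvPolynomial (Fin 2) K} (hφ : IsLinearAut φ) :
    IsLinearAut φ.symm := by
  rw [isLinearAut_iff_mem_span]
  intro i
  set V := Submodule.span K (Set.range (X : Fin 2 → MvPolynomial (Fin 2) K))
  have : FiniteDimensional K V := FiniteDimensional.span_of_finite K (Set.finite_range X)
  let f : V →ₗ[K] V := φ.toLinearMap.restrict fun p hp => hφ.map_mem_span hp
  have hf : Function.Injective f := fun a b hab =>
    Subtype.ext (φ.injective (congrArg Subtype.val hab))
  obtain ⟨p, hp⟩ := LinearMap.injective_iff_surjective.mp hf ⟨X i, Submodule.subset_span ⟨i, rfl⟩⟩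
  have hpX : φ p = X i := congrArg Subtype.val hp
  rw [← hpX, φ.symm_apply_apply]
  exact p.2

end Linear

section Elementary

theorem Fin.two_eq_of_ne_of_ne {a b c : Fin 2} (hab : a ≠ b) (hca : c ≠ a) : c = b := by
  omega

variable {K : Type*} [Field K] {ξ ζ : MvPolynomial (Fin 2) K ≃ₐ[K] MvPolynomial (Fin 2) K}

theorem map_linearForm_of_elementary {i : Fin 2} {F : MvPolynomial (Fin 2) K}
    (hξi : ξ (X i) = X i + F) (hξj : ∀ j ≠ i, ξ (X j) = X j) (c : Fin 2 → K) :
    ξ (∑ k, C (c k) * X k) = ∑ k, C (c k) * X k + C (c i) * F := by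
  have hξ : ∀ k, ξ (X k) = X k + if k = i then F else 0 := by
    intro k
    split_ifs with hk
    · rw [hk, hξi]
    · rw [hξj k hk, add_zero]
  simp only [map_sum, map_mul, algEquiv_C, hξ, mul_add, Finset.sum_add_distrib, mul_ite, mul_zero,
    Finset.sum_ite_eq']
  simp

theorem isElementary_conj {i j m : Fin 2} {F : MvPolynomial (Fin 2) K} {μ : K}
    (hiF : i ∉ F.vars) (hξi : ξ (X i) = X i + F) (hξj : ∀ k ≠ i, ξ (X k) = X k)
    (hji : j ≠ i) (hζ : IsLinearAut ζ) (hμ : μ ≠ 0) (hζj : ζ (X j) = C μ * X m) :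
    IsElementary (ζ * ξ * ζ.symm) := by
  classical
  obtain ⟨i', hi'm⟩ : ∃ i', i' ≠ m := ⟨m + 1, by omega⟩
  obtain ⟨c, hc⟩ := hζ.symm i'
  have hvars : (ζ F).vars ⊆ {m} := by
    have hζF : ζ F = bind₁ (fun k => ζ (X k)) F :=
      AlgHom.congr_fun (aeval_unique ζ.toAlgHom) F
    rw [hζF]
    refine (vars_bind₁ _ F).trans (Finset.biUnion_subset.mpr fun k hk => ?_)
    rw [Fin.two_eq_of_ne_of_ne hji.symm (ne_of_mem_of_not_mem hk hiF), hζj, vars_C_mul μ hμ,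
      vars_X]
  have hζsymm : ζ.symm (X m) = C μ⁻¹ * X j := by
    rw [ζ.symm_apply_eq, map_mul, hζj, algEquiv_C, ← mul_assoc, ← C_mul, inv_mul_cancel₀ hμ, C_1,
      one_mul]
  refine ⟨i', C (c i) * ζ F, fun hi' => ?_, ?_, fun k hk => ?_⟩
  · have hi'ζF : i' ∈ (ζ F).vars := by
      simpa only [vars_C, Finset.empty_union] using vars_mul (C (c i)) (ζ F) hi'
    exact hi'm (Finset.mem_singleton.mp (hvars hi'ζF))
  · rw [AlgEquiv.mul_apply, AlgEquiv.mul_apply, hc, map_linearForm_of_elementary hξi hξj, map_add,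
      ← hc, ζ.apply_symm_apply, map_mul, algEquiv_C]
  · rw [Fin.two_eq_of_ne_of_ne hi'm hk, AlgEquiv.mul_apply, AlgEquiv.mul_apply, hζsymm, map_mul,
      algEquiv_C, hξj j hji, ← hζsymm, ζ.apply_symm_apply]

end Elementary

theorem exists_graded_linear_fixing_X_zero {K G : Type*} [Field K] [AddCommGroup G]
    {w : Fin 2 → G} {ξ : MvPolynomial (Fin 2) K ≃ₐ[K] MvPolynomial (Fin 2) K}
    (hξ : IsGraded w ξ) (hξl : IsLinearAut ξ) (j : Fin 2) :
    ∃ N : MvPolynomial (Fin 2) K ≃ₐ[K] MvPolynomial (Fin 2) K,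
      (IsGraded w N ∧ IsLinearAut N) ∧ N (X 0) = X 0 ∧
      ∃ (m : Fin 2) (μ : K), μ ≠ 0 ∧ N (C μ * X m) = ξ (X j) := by
  obtain ⟨c, hc⟩ := hξl j
  rw [Fin.sum_univ_two] at hc
  by_cases hc1 : c 1 = 0
  · have hl : IsLinearAut (1 : MvPolynomial (Fin 2) K ≃ₐ[K] MvPolynomial (Fin 2) K) :=
      isLinearAut_iff_mem_span.mpr fun i => Submodule.subset_span ⟨i, rfl⟩
    refine ⟨1, ⟨fun _ _ h => h, hl⟩, rfl, 0, c 0,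
      fun hc0 => X_ne_zero (R := K) j (ξ.injective ?_), ?_⟩
    · simp [hc, hc0, hc1]
    · simp [hc, hc1]
  · let A : GL (Fin 2) K := .mkOfDetNeZero !![1, 0; c 0, c 1] (by simpa using hc1)
    refine ⟨linearChangeOfVars A, ⟨?_, isLinearAut_linearChangeOfVars A⟩, ?_, 1, 1, one_ne_zero, ?_⟩
    · apply isGraded_of_isWeightedHomogeneous_X
      intro k
      fin_cases k
      · simpa [A, linearChangeOfVars_X] using isWeightedHomogeneous_X K w 0
      · have hhom := hξ _ _ (isWeightedHomogeneous_X K w j)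
        have hw : w 1 = w j := by
          simpa [Finsupp.weight_single] using
            hhom (d := Finsupp.single 1 1) (by simpa [hc] using hc1)
        simpa [A, linearChangeOfVars_X, hw, hc] using hhom
    · simp [A, linearChangeOfVars_X]
    · simp [A, linearChangeOfVars_X, hc]

theorem linear_after_elementary_decomposition_general
    {K : Type*} [Field K]
    {G : Type*} [AddCommGroup G] (w : Fin 2 → G)
    (ξ₁ ξ₂ : MvPolynomial (Fin 2) K ≃ₐ[K] MvPolynomial (Fin 2) K)
    (h₁ : IsGraded w ξ₁ ∧ IsElementary ξ₁)
    (h₂ : IsGraded w ξ₂ ∧ IsLinearAut ξ₂) :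
    ∃ ζ₀ ζ₁ ζ₂ : MvPolynomial (Fin 2) K ≃ₐ[K] MvPolynomial (Fin 2) K,
      (IsGraded w ζ₀ ∧ IsLinearAut ζ₀) ∧
      (IsGraded w ζ₁ ∧ IsElementary ζ₁) ∧
      (IsGraded w ζ₂ ∧ IsLinearAut ζ₂) ∧
      (∃ l : K, l ≠ 0 ∧ ζ₂ (X 0) = C l * X 0) ∧
      ξ₂ * ξ₁ = ζ₂ * ζ₁ * ζ₀ := by
  obtain ⟨hg₁, i, F, hiF, hξ₁i, hξ₁j⟩ := h₁
  obtain ⟨hg₂, hl₂⟩ := h₂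
  obtain ⟨N, ⟨hNg, hNl⟩, hN0, m, μ, hμ, hNξ⟩ :=
    exists_graded_linear_fixing_X_zero hg₂ hl₂ (i + 1)
  set ζ₀ := N.symm * ξ₂
  have hg₀ : IsGraded w ζ₀ := hNg.symm.mul hg₂
  have hl₀ : IsLinearAut ζ₀ := hNl.symm.mul hl₂
  have hζ₀ : ζ₀ (X (i + 1)) = C μ * X m := by
    rw [AlgEquiv.mul_apply, ← hNξ, N.symm_apply_apply]
  refine ⟨ζ₀, ζ₀ * ξ₁ * ζ₀.symm, N, ⟨hg₀, hl₀⟩,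
    ⟨(hg₀.mul hg₁).mul hg₀.symm, isElementary_conj hiF hξ₁i hξ₁j (by omega) hl₀ hμ hζ₀⟩,
    ⟨hNg, hNl⟩, ⟨1, one_ne_zero, by rw [hN0, C_1, one_mul]⟩, ?_⟩
  simp only [ζ₀, ← AlgEquiv.aut_inv]
  group

/-- Let `ξ₁` be a graded elementary automorphism of `K[u,v]` and `ξ₂` a graded linear
automorphism. Then `ξ₂ ∘ ξ₁ = ζ₂ ∘ ζ₁ ∘ ζ₀`, where `ζ₀, ζ₂` are graded linear
automorphisms, `ζ₁` is a graded elementary automorphism, and `ζ₂(u) = λ u` with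
`λ ≠ 0`. Here `u = X 0`, `v = X 1`, and `*` is composition. -/
theorem linear_after_elementary_decomposition
    {K : Type*} [Field K] [IsAlgClosed K] [CharZero K]
    {G : Type*} [AddCommGroup G] (w : Fin 2 → G)
    (ξ₁ ξ₂ : MvPolynomial (Fin 2) K ≃ₐ[K] MvPolynomial (Fin 2) K)
    (h₁ : IsGraded w ξ₁ ∧ IsElementary ξ₁)
    (h₂ : IsGraded w ξ₂ ∧ IsLinearAut ξ₂) :
    ∃ ζ₀ ζ₁ ζ₂ : MvPolynomial (Fin 2) K ≃ₐ[K] MvPolynomial (Fin 2) K,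
      (IsGraded w ζ₀ ∧ IsLinearAut ζ₀) ∧
      (IsGraded w ζ₁ ∧ IsElementary ζ₁) ∧
      (IsGraded w ζ₂ ∧ IsLinearAut ζ₂) ∧
      (∃ l : K, l ≠ 0 ∧ ζ₂ (X 0) = C l * X 0) ∧
      ξ₂ * ξ₁ = ζ₂ * ζ₁ * ζ₀ :=
  linear_after_elementary_decomposition_general w ξ₁ ξ₂ h₁ h₂
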